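/- Let G be a graph and C a set of vertices such that the induced subgraph G[C] has maximum degree at most one. Suppose N(C) = {v_1, ..., v_ℓ} and there exist 2ℓ pairwise distinct components C_1, ..., C_{2ℓ} of G[C] such that v_i is adjacent to both C_{2i−1} and C_{2i} for each 1 ≤ i ≤ ℓ. Then opt(G) = opt(G − (N(C) ∪ C)) + ℓ, where opt denotes the maximum number of vertex-disjoint P_2's. -/

import Mathlib

open Finset

variable {V : Type*}

def P2verts [DecidableEq V] (p : V × V × V) : Finset V := {p.1, p.2.1, p.2.2}

def IsP2 (G : SimpleGraph V) (p : V × V × V) : Prop :=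
  p.1 ≠ p.2.1 ∧ p.1 ≠ p.2.2 ∧ p.2.1 ≠ p.2.2 ∧ G.Adj p.1 p.2.1 ∧ G.Adj p.2.1 p.2.2

def IsP2Packing [DecidableEq V] (G : SimpleGraph V) (P : Finset (V × V × V)) : Prop :=
  (∀ p ∈ P, IsP2 G p) ∧
    ∀ p ∈ P, ∀ q ∈ P, p ≠ q → Disjoint (P2verts p) (P2verts q)

noncomputable def opt [DecidableEq V] (G : SimpleGraph V) : ℕ :=
  sSup {n | ∃ P : Finset (V × V × V), IsP2Packing G P ∧ P.card = n}

def restrict (G : SimpleGraph V) (S : Set V) : SimpleGraph V where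
  Adj a b := G.Adj a b ∧ a ∈ S ∧ b ∈ S
  symm := ⟨fun a b h => ⟨h.1.symm, h.2.2, h.2.1⟩⟩
  loopless := ⟨fun a h => G.loopless.irrefl a h.1⟩

def nbhd (G : SimpleGraph V) (C : Set V) : Set V :=
  {v | v ∉ C ∧ ∃ c ∈ C, G.Adj v c}

def MaxDegLeOne (G : SimpleGraph V) (C : Set V) : Prop :=
  ∀ v ∈ C, ∀ w ∈ C, ∀ x ∈ C, G.Adj v w → G.Adj v x → w = x

def IsEdgeComp (G : SimpleGraph V) (C : Set V) (x y : V) : Prop :=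
  x ∈ C ∧ y ∈ C ∧ x ≠ y ∧ G.Adj x y ∧
    (∀ z ∈ C, G.Adj z x → z = y) ∧ (∀ z ∈ C, G.Adj z y → z = x)

def IsComp (G : SimpleGraph V) (C : Set V) (s : Set V) : Prop :=
  (∃ x, s = {x} ∧ x ∈ C ∧ ∀ z ∈ C, ¬ G.Adj z x) ∨
  (∃ x y, s = {x, y} ∧ IsEdgeComp G C x y)


section Helpers

variable [DecidableEq V]

lemma packing_bddAbove (G : SimpleGraph V) [Fintype V] :
    BddAbove {n | ∃ P : Finset (V × V × V), IsP2Packing G P ∧ P.card = n} := by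
  refine ⟨Fintype.card (V × V × V), ?_⟩
  rintro n ⟨P, _, rfl⟩
  simpa using Finset.card_le_univ P

lemma packing_nonempty (G : SimpleGraph V) :
    Set.Nonempty {n | ∃ P : Finset (V × V × V), IsP2Packing G P ∧ P.card = n} :=
  ⟨0, ∅, ⟨fun p hp => absurd hp (Finset.notMem_empty p),
    fun p hp => absurd hp (Finset.notMem_empty p)⟩, rfl⟩

lemma le_opt [Fintype V] {G : SimpleGraph V} {P : Finset (V × V × V)}
    (h : IsP2Packing G P) : P.card ≤ opt G :=
  le_csSup (packing_bddAbove G) ⟨P, h, rfl⟩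

lemma opt_le [Fintype V] {G : SimpleGraph V} {m : ℕ}
    (h : ∀ P : Finset (V × V × V), IsP2Packing G P → P.card ≤ m) : opt G ≤ m := by
  refine csSup_le (packing_nonempty G) ?_
  rintro n ⟨P, hP, rfl⟩
  exact h P hP

lemma exists_opt [Fintype V] (G : SimpleGraph V) :
    ∃ P : Finset (V × V × V), IsP2Packing G P ∧ P.card = opt G :=
  Nat.sSup_mem (packing_nonempty G) (packing_bddAbove G)

lemma comp_subset {G : SimpleGraph V} {C s : Set V} (h : IsComp G C s) : s ⊆ C := by
  rcases h with ⟨x, rfl, hx, _⟩ | ⟨x, y, rfl, hx⟩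
  · simpa
  · intro z hz
    rcases hz with rfl | rfl
    · exact hx.1
    · exact hx.2.1

lemma comp_eq {G : SimpleGraph V} {C : Set V}
    {s t : Set V} (hs : IsComp G C s) (ht : IsComp G C t) {x : V}
    (hxs : x ∈ s) (hxt : x ∈ t) : s = t := by
  rcases hs with ⟨a, rfl, haC, hiso⟩ | ⟨a, b, rfl, haC, hbC, hne, hadj, hm1, hm2⟩
  · rcases ht with ⟨a', rfl, _, _⟩ | ⟨a', b', rfl, ha'C, hb'C, hne', hadj', hm1', hm2'⟩
    · simp only [Set.mem_singleton_iff] at hxs hxt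
      subst hxs; subst hxt; rfl
    · simp only [Set.mem_singleton_iff] at hxs
      subst hxs
      rcases hxt with rfl | rfl
      · exact absurd hadj'.symm (hiso b' hb'C)
      · exact absurd hadj' (hiso a' ha'C)
  · rcases ht with ⟨a', rfl, ha'C, hiso'⟩ | ⟨a', b', rfl, ha'C, hb'C, hne', hadj', hm1', hm2'⟩
    · simp only [Set.mem_singleton_iff] at hxt
      subst hxt
      rcases hxs with rfl | rfl
      · exact absurd hadj.symm (hiso' b hbC)
      · exact absurd hadj (hiso' a haC)
    · rcases hxs with rfl | rfl
      · rcases hxt with rfl | rfl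
        · have : b = b' := hm1' b hbC hadj.symm
          subst this; rfl
        · have : b = a' := hm2' b hbC hadj.symm
          subst this
          exact Set.pair_comm _ _
      · rcases hxt with rfl | rfl
        · have : a = b' := hm1' a haC hadj
          subst this
          exact Set.pair_comm _ _
        · have : a = a' := hm2' a haC hadj
          subst this; rfl

lemma mem_P2verts {p : V × V × V} {x : V} :
    x ∈ P2verts p ↔ x = p.1 ∨ x = p.2.1 ∨ x = p.2.2 := by
  simp [P2verts]

end Helpers

theorem double_crown_reduction {V : Type*} [Fintype V] [DecidableEq V] (G : SimpleGraph V)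
    (C : Set V) (hdeg : MaxDegLeOne G C)
    (ℓ : ℕ) (v : Fin ℓ → V) (hv : Function.Injective v)
    (hvrange : Set.range v = nbhd G C)
    (c : Fin (2 * ℓ) → Set V) (hcinj : Function.Injective c)
    (hc : ∀ i, IsComp G C (c i))
    (hadj : ∀ i : Fin ℓ,
      (∃ w ∈ c ⟨2 * i.1, by have := i.isLt; omega⟩, G.Adj (v i) w) ∧
      (∃ w ∈ c ⟨2 * i.1 + 1, by have := i.isLt; omega⟩, G.Adj (v i) w)) :
    opt G = opt (restrict G ((nbhd G C ∪ C)ᶜ)) + ℓ := by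
  classical
  set S : Set V := (nbhd G C ∪ C)ᶜ with hS
  set G' := restrict G S with hG'
  have hvN : ∀ i : Fin ℓ, v i ∈ nbhd G C := fun i => hvrange ▸ Set.mem_range_self i
  have hvC : ∀ i : Fin ℓ, v i ∉ C := fun i => (hvN i).1
  have hwdis : ∀ (k k' : Fin (2 * ℓ)), k ≠ k' → ∀ x, x ∈ c k → x ∈ c k' → False :=
    fun k k' hkk x h h' => hkk (hcinj (comp_eq (hc k) (hc k') h h'))
  have hge : opt G' + ℓ ≤ opt G := by
    obtain ⟨P', hP', hcard'⟩ := exists_opt G'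
    choose w₁ hw₁ haw₁ using fun i : Fin ℓ => (hadj i).1
    choose w₂ hw₂ haw₂ using fun i : Fin ℓ => (hadj i).2
    have hw₁C : ∀ i, w₁ i ∈ C := fun i => comp_subset (hc _) (hw₁ i)
    have hw₂C : ∀ i, w₂ i ∈ C := fun i => comp_subset (hc _) (hw₂ i)
    have hw12 : ∀ i j : Fin ℓ, w₁ i ≠ w₂ j := by
      intro i j h
      refine hwdis ⟨2 * i.1, by omega⟩ ⟨2 * j.1 + 1, by omega⟩ ?_ (w₁ i) (hw₁ i)
        (by rw [h]; exact hw₂ j)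
      intro hh
      simp only [Fin.mk.injEq] at hh
      omega
    have hw11 : ∀ i j : Fin ℓ, i ≠ j → w₁ i ≠ w₁ j := by
      intro i j hij h
      refine hwdis ⟨2 * i.1, by omega⟩ ⟨2 * j.1, by omega⟩ ?_ (w₁ i) (hw₁ i)
        (by rw [h]; exact hw₁ j)
      intro hh
      simp only [Fin.mk.injEq] at hh
      exact hij (Fin.ext (by omega))
    have hw22 : ∀ i j : Fin ℓ, i ≠ j → w₂ i ≠ w₂ j := by
      intro i j hij h
      refine hwdis ⟨2 * i.1 + 1, by omega⟩ ⟨2 * j.1 + 1, by omega⟩ ?_ (w₂ i) (hw₂ i)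
        (by rw [h]; exact hw₂ j)
      intro hh
      simp only [Fin.mk.injEq] at hh
      exact hij (Fin.ext (by omega))
    set t : Fin ℓ → V × V × V := fun i => (w₁ i, v i, w₂ i) with ht
    have htP2 : ∀ i, IsP2 G (t i) := by
      intro i
      simp only [IsP2, ht]
      exact ⟨fun h => hvC i (h ▸ hw₁C i), hw12 i i,
        fun h => hvC i (h.symm ▸ hw₂C i), (haw₁ i).symm, haw₂ i⟩
    have htinj : Function.Injective t := fun i j h => hv (congrArg (fun p => p.2.1) h)
    have hPS : ∀ p ∈ P', ∀ x ∈ P2verts p, x ∈ S := by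
      intro p hp x hx
      obtain ⟨h1, h2, h3, h4, h5⟩ := hP'.1 p hp
      rcases mem_P2verts.1 hx with rfl | rfl | rfl
      · exact h4.2.1
      · exact h4.2.2
      · exact h5.2.2
    have hTS : ∀ i : Fin ℓ, ∀ x ∈ P2verts (t i), x ∈ nbhd G C ∪ C := by
      intro i x hx
      rcases mem_P2verts.1 hx with rfl | rfl | rfl
      · exact Or.inr (hw₁C i)
      · exact Or.inl (hvN i)
      · exact Or.inr (hw₂C i)
    have hTd : ∀ i j : Fin ℓ, i ≠ j → Disjoint (P2verts (t i)) (P2verts (t j)) := by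
      intro i j hij
      rw [Finset.disjoint_left]
      intro x hx hx'
      simp only [P2verts, ht, Finset.mem_insert, Finset.mem_singleton] at hx hx'
      rcases hx with h1 | h1 | h1 <;>
        rcases hx' with h2 | h2 | h2 <;> rw [h1] at h2
      · exact hw11 i j hij h2
      · exact hvC j (by rw [← h2]; exact hw₁C i)
      · exact hw12 i j h2
      · exact hvC i (by rw [h2]; exact hw₁C j)
      · exact hij (hv h2)
      · exact hvC i (by rw [h2]; exact hw₂C j)
      · exact hw12 j i h2.symm
      · exact hvC j (by rw [← h2]; exact hw₂C i)
      · exact hw22 i j hij h2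
    set T : Finset (V × V × V) := Finset.univ.image t with hT
    have hTP' : Disjoint T P' := by
      rw [Finset.disjoint_left]
      intro p hpT hpP'
      obtain ⟨i, _, rfl⟩ := Finset.mem_image.1 hpT
      have := hPS _ hpP' (v i) (mem_P2verts.2 (Or.inr (Or.inl rfl)))
      exact this (Or.inl (hvN i))
    have hpack : IsP2Packing G (T ∪ P') := by
      constructor
      · intro p hp
        rcases Finset.mem_union.1 hp with hp | hp
        · obtain ⟨i, _, rfl⟩ := Finset.mem_image.1 hp
          exact htP2 i
        · obtain ⟨h1, h2, h3, h4, h5⟩ := hP'.1 p hp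
          exact ⟨h1, h2, h3, h4.1, h5.1⟩
      · intro p hp q hq hpq
        rcases Finset.mem_union.1 hp with hp | hp <;> rcases Finset.mem_union.1 hq with hq | hq
        · obtain ⟨i, _, rfl⟩ := Finset.mem_image.1 hp
          obtain ⟨j, _, rfl⟩ := Finset.mem_image.1 hq
          exact hTd i j (fun h => hpq (by rw [h]))
        · obtain ⟨i, _, rfl⟩ := Finset.mem_image.1 hp
          rw [Finset.disjoint_left]
          intro x hx hx'
          exact (hPS q hq x hx') (hTS i x hx)
        · obtain ⟨j, _, rfl⟩ := Finset.mem_image.1 hq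
          rw [Finset.disjoint_left]
          intro x hx hx'
          exact (hPS p hp x hx) (hTS j x hx')
        · exact hP'.2 p hp q hq hpq
    have hcardT : T.card = ℓ := by
      rw [hT, Finset.card_image_of_injective _ htinj]
      simp
    have := le_opt hpack
    rw [Finset.card_union_of_disjoint hTP', hcardT, hcard'] at this
    omega
  have hle : opt G ≤ opt G' + ℓ := by
    obtain ⟨P, hP, hcard⟩ := exists_opt G
    set P₁ := P.filter (fun p => ∃ i : Fin ℓ, v i ∈ P2verts p) with hP₁
    set P₂ := P.filter (fun p => ¬ ∃ i : Fin ℓ, v i ∈ P2verts p) with hP₂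
    have hsplit : P₁.card + P₂.card = P.card :=
      Finset.card_filter_add_card_filter_not _
    have h1 : P₁.card ≤ ℓ := by
      have hle1 : P₁.card ≤ (Finset.univ.image v).card := by
        apply Finset.card_le_card_of_injOn
          (fun p => if h : ∃ i : Fin ℓ, v i ∈ P2verts p then v h.choose else p.1)
        · intro p hp
          rw [Finset.mem_coe, hP₁, Finset.mem_filter] at hp
          dsimp only
          rw [dif_pos hp.2]
          exact Finset.mem_image_of_mem v (Finset.mem_univ _)
        · intro p hp q hq hpq
          by_contra hne
          rw [Finset.mem_coe, hP₁, Finset.mem_filter] at hp hq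
          dsimp only at hpq
          rw [dif_pos hp.2, dif_pos hq.2] at hpq
          have hq2 := hq.2.choose_spec
          have hp2 := hp.2.choose_spec
          rw [hpq] at hp2
          exact Finset.disjoint_left.1 (hP.2 p hp.1 q hq.1 hne) hp2 hq2
      calc P₁.card ≤ (Finset.univ.image v).card := hle1
        _ ≤ (Finset.univ : Finset (Fin ℓ)).card := Finset.card_image_le
        _ = ℓ := by simp
    have hP₂S : ∀ p ∈ P₂, ∀ x ∈ P2verts p, x ∈ S := by
      intro p hp x hx
      rw [hP₂, Finset.mem_filter] at hp
      have hnN : ∀ y ∈ P2verts p, y ∉ nbhd G C := by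
        intro y hy hyN
        have : y ∈ Set.range v := hvrange ▸ hyN
        obtain ⟨i, rfl⟩ := this
        exact hp.2 ⟨i, hy⟩
      obtain ⟨hne1, hne2, hne3, ha1, ha2⟩ := hP.1 p hp.1
      have hmid : p.2.1 ∉ C := by
        intro hm
        have h1 : p.1 ∈ C := by
          by_contra h
          exact hnN p.1 (mem_P2verts.2 (Or.inl rfl)) ⟨h, p.2.1, hm, ha1⟩
        have h2 : p.2.2 ∈ C := by
          by_contra h
          exact hnN p.2.2 (mem_P2verts.2 (Or.inr (Or.inr rfl))) ⟨h, p.2.1, hm, ha2.symm⟩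
        exact hne2 (hdeg p.2.1 hm p.1 h1 p.2.2 h2 ha1.symm ha2)
      have hend1 : p.1 ∉ C := fun h =>
        hnN p.2.1 (mem_P2verts.2 (Or.inr (Or.inl rfl))) ⟨hmid, p.1, h, ha1.symm⟩
      have hend2 : p.2.2 ∉ C := fun h =>
        hnN p.2.1 (mem_P2verts.2 (Or.inr (Or.inl rfl))) ⟨hmid, p.2.2, h, ha2⟩
      simp only [hS, Set.mem_compl_iff, Set.mem_union, not_or]
      refine ⟨hnN x hx, ?_⟩
      rcases mem_P2verts.1 hx with rfl | rfl | rfl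
      · exact hend1
      · exact hmid
      · exact hend2
    have hpack2 : IsP2Packing G' P₂ := by
      constructor
      · intro p hp
        obtain ⟨h1, h2, h3, h4, h5⟩ := hP.1 p (Finset.mem_of_mem_filter p hp)
        refine ⟨h1, h2, h3, ⟨h4, hP₂S p hp _ ?_, hP₂S p hp _ ?_⟩,
          ⟨h5, hP₂S p hp _ ?_, hP₂S p hp _ ?_⟩⟩ <;> simp [mem_P2verts]
      · intro p hp q hq
        exact hP.2 p (Finset.mem_of_mem_filter p hp) q (Finset.mem_of_mem_filter q hq)
    have h2 : P₂.card ≤ opt G' := le_opt hpack2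
    omega
  omega
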